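/- The polynomial B_{(p−1)â_0}(1, y_1,…,y_N) is an invertible element of R', of norm exactly 1/p; in particular all of its coefficients have norm ≤ 1/p, its constant term −p/(p−1)! has norm exactly 1/p, and for every λ ∈ 𝒟_+ one has ‖B_{(p−1)â_0}(1, λ_1/λ_0,…,λ_N/λ_0)‖ = 1/p, so that its reciprocal is a rational function in the λ_i/λ_0 defined at every point of 𝒟_+ and hence belongs to R'. -/

import Mathlib

open scoped BigOperators Classical

namespace AHG

/-- `hat v = (1, v) ∈ ℤ^{n+1}`: coordinate `0` equals `1`, the rest is `v`. -/
def hat {n : ℕ} (v : Fin n → ℤ) : Fin (n + 1) → ℤ := Fin.cons 1 v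

/-- The coefficients `b_i` of the Dwork series
`θ(t) = exp(π(t - t^p)) = exp(πt)·exp(-πt^p) = Σ b_i t^i`;
explicitly `b_i = Σ_{j + p k = i} π^{j+k} (-1)^k / (j! k!)`. -/
noncomputable def dworkB (p : ℕ) {K : Type*} [Field K] (π : K) (i : ℕ) : K :=
  ∑ k ∈ Finset.range (i + 1),
    if p * k ≤ i then
      ((-1 : K) ^ k * π ^ (i - p * k + k)) /
        ((Nat.factorial (i - p * k) : K) * (Nat.factorial k : K))
    else 0

/-- The real cone `C` generated by `â_0, …, â_N`. -/
def cone {n N : ℕ} (a : Fin (N + 1) → Fin n → ℤ) : Set (Fin (n + 1) → ℝ) :=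
  {x | ∃ t : Fin (N + 1) → ℝ, (∀ j, 0 ≤ t j) ∧
      x = ∑ j, t j • fun i => (hat (a j) i : ℝ)}

/-- `M = C ∩ ℤA`. -/
def latticeM {n N : ℕ} (a : Fin (N + 1) → Fin n → ℤ) : Set (Fin (n + 1) → ℤ) :=
  {μ | (fun i => (μ i : ℝ)) ∈ cone a ∧
      μ ∈ AddSubgroup.closure (Set.range fun j => hat (a j))}

/-- `M°`: the elements of `M` lying on no proper (exposed) face of `C`, i.e. every linear
functional nonnegative on `C` and vanishing at `μ` vanishes identically on `C`. -/
def latticeMint {n N : ℕ} (a : Fin (N + 1) → Fin n → ℤ) : Set (Fin (n + 1) → ℤ) :=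
  {μ | μ ∈ latticeM a ∧
      ∀ ℓ : (Fin (n + 1) → ℝ) →ₗ[ℝ] ℝ, (∀ x ∈ cone a, 0 ≤ ℓ x) →
        ℓ (fun i => (μ i : ℝ)) = 0 → ∀ x ∈ cone a, ℓ x = 0}

/-- `a 0` is the unique lattice point interior to `Δ = conv(a 1, …, a N)`. -/
def uniqueInteriorPoint {n N : ℕ} (a : Fin (N + 1) → Fin n → ℤ) : Prop :=
  (fun i => (a 0 i : ℝ)) ∈
      interior (convexHull ℝ (Set.range fun j : Fin N => fun i => (a j.succ i : ℝ))) ∧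
    ∀ v : Fin n → ℤ,
      (fun i => (v i : ℝ)) ∈
          interior (convexHull ℝ (Set.range fun j : Fin N => fun i => (a j.succ i : ℝ))) →
        v = a 0

/-- The set `L_+`, identified with the tuples `(l_1,…,l_N) ∈ ℤ_{≥0}^N` such that
`Σ l_i â_i = (Σ l_i) â_0` (then `l_0 = -Σ l_i`). -/
def LplusSet {n N : ℕ} (a : Fin (N + 1) → Fin n → ℤ) : Set (Fin N → ℕ) :=
  {l | ∑ i : Fin N, l i • hat (a i.succ) = (∑ i : Fin N, l i) • hat (a 0)}

/-- The norm (sup of coefficient norms) of an element of `R`, i.e. of a formal power series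
in the variables `λ_i/λ_0`, `i = 1, …, N`. -/
noncomputable def Rnorm {N : ℕ} {K : Type*} [NormedField K]
    (f : MvPowerSeries (Fin N) K) : ℝ :=
  ⨆ ν : Fin N →₀ ℕ, ‖f ν‖

/-- Membership in `R`: bounded coefficients. -/
def memR {N : ℕ} {K : Type*} [NormedField K] (f : MvPowerSeries (Fin N) K) : Prop :=
  BddAbove (Set.range fun ν : Fin N →₀ ℕ => ‖f ν‖)

/-- Norm-convergence (in the sup norm of `R`) of a series of elements of `R` to `g`. -/
def HasSumR {ι : Type*} {N : ℕ} {K : Type*} [NormedField K]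
    (f : ι → MvPowerSeries (Fin N) K) (g : MvPowerSeries (Fin N) K) : Prop :=
  Filter.Tendsto (fun s : Finset ι => Rnorm (g - ∑ i ∈ s, f i)) Filter.atTop (nhds 0)

/-- Invertibility in `R`. -/
def invR {N : ℕ} {K : Type*} [NormedField K] (f : MvPowerSeries (Fin N) K) : Prop :=
  memR f ∧ ∃ g : MvPowerSeries (Fin N) K, memR g ∧ f * g = 1

/-- `B_μ(1, y_1, …, y_N)` as a power series (in fact a polynomial) in `y_i = λ_i/λ_0`:
the coefficient of `y^ν` is `b_{ν_0} b_{ν_1} ⋯ b_{ν_N}` where `ν_0 = μ_0 - Σ ν_i`,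
whenever `(ν_0, ν_1, …, ν_N)` is a nonnegative solution of `Σ ν_i â_i = μ`, and `0` otherwise. -/
noncomputable def Bone (p : ℕ) {n N : ℕ} (a : Fin (N + 1) → Fin n → ℤ)
    {K : Type*} [Field K] (π : K) (μ : Fin (n + 1) → ℤ) : MvPowerSeries (Fin N) K :=
  fun ν =>
    if 0 ≤ μ 0 - ∑ i : Fin N, (ν i : ℤ) ∧
        (μ 0 - ∑ i : Fin N, (ν i : ℤ)) • hat (a 0) +
          ∑ i : Fin N, (ν i : ℤ) • hat (a i.succ) = μ then
      dworkB p π (μ 0 - ∑ i : Fin N, (ν i : ℤ)).toNat * ∏ i : Fin N, dworkB p π (ν i)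
    else 0

/-- The substitution `λ_i/λ_0 ↦ λ_i^p/λ_0^p` on `R`, i.e. `ξ(λ) ↦ ξ(λ^p)`. -/
noncomputable def frobR (p : ℕ) {N : ℕ} {K : Type*} [Field K]
    (f : MvPowerSeries (Fin N) K) : MvPowerSeries (Fin N) K :=
  fun ν => if h : ∃ ν' : Fin N →₀ ℕ, p • ν' = ν then f h.choose else 0

/-- The term indexed by `ν ∈ M°` in the series defining `η_ρ`:
`π^{ρ_0-ν_0} B_{pν-ρ}(1, λ_1/λ_0, …, λ_N/λ_0) ξ_ν(λ^p)` when `pν - ρ ∈ M`, else `0`. -/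
noncomputable def etaTerm (p : ℕ) {n N : ℕ} (a : Fin (N + 1) → Fin n → ℤ)
    {K : Type*} [Field K] (π : K)
    (ξ : {μ : Fin (n + 1) → ℤ // μ ∈ latticeMint a} → MvPowerSeries (Fin N) K)
    (ρ : Fin (n + 1) → ℤ) (ν : {μ : Fin (n + 1) → ℤ // μ ∈ latticeMint a}) :
    MvPowerSeries (Fin N) K :=
  if (p : ℤ) • ν.1 - ρ ∈ latticeM a then
    π ^ (ρ 0 - ν.1 0) • (Bone p a π ((p : ℤ) • ν.1 - ρ) * frobR p (ξ ν))
  else 0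


/-- The index type `M°` (as a subtype). -/
abbrev Msub {n N : ℕ} (a : Fin (N + 1) → Fin n → ℤ) : Type _ :=
  {μ : Fin (n + 1) → ℤ // μ ∈ latticeMint a}

/-- Membership in `S`: a family `(ξ_μ)_{μ ∈ M°}` of elements of `R` with uniformly
bounded coefficients. -/
def memS {n N : ℕ} (a : Fin (N + 1) → Fin n → ℤ) {K : Type*} [NormedField K]
    (ξ : {μ : Fin (n + 1) → ℤ // μ ∈ latticeMint a} → MvPowerSeries (Fin N) K) : Prop :=
  BddAbove (Set.range
    fun q : {μ : Fin (n + 1) → ℤ // μ ∈ latticeMint a} × (Fin N →₀ ℕ) => ‖ξ q.1 q.2‖)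

/-- The norm on `S`. -/
noncomputable def Snorm {n N : ℕ} (a : Fin (N + 1) → Fin n → ℤ) {K : Type*} [NormedField K]
    (ξ : {μ : Fin (n + 1) → ℤ // μ ∈ latticeMint a} → MvPowerSeries (Fin N) K) : ℝ :=
  ⨆ μ : {μ : Fin (n + 1) → ℤ // μ ∈ latticeMint a}, Rnorm (ξ μ)

/-- The truncation `Φ_1` of `Φ`, as a function of `λ = (λ_0, …, λ_N)`. -/
noncomputable def Phi1 (p : ℕ) {n N : ℕ} (a : Fin (N + 1) → Fin n → ℤ)
    {K : Type*} [Field K] (lam : Fin (N + 1) → K) : K :=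
  ∑ l ∈ (Fintype.piFinset fun _ : Fin N => Finset.range p).filter
      (fun l => l ∈ LplusSet a ∧ ∑ i : Fin N, l i ≤ p - 1),
    (-1 : K) ^ (∑ i : Fin N, l i) * (Nat.multinomial Finset.univ l : K) *
      ∏ i : Fin N, (lam i.succ / lam 0) ^ l i

/-- The open polydisk `𝒟`. -/
def Dopen {N : ℕ} {K : Type*} [NormedField K] : Set (Fin (N + 1) → K) :=
  {lam | lam 0 ≠ 0 ∧ ∀ i : Fin N, ‖lam i.succ / lam 0‖ < 1}

/-- The region `𝒟_+`. -/
def Dplus (p : ℕ) {n N : ℕ} (a : Fin (N + 1) → Fin n → ℤ) {K : Type*} [NormedField K] :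
    Set (Fin (N + 1) → K) :=
  {lam | lam 0 ≠ 0 ∧ (∀ i : Fin N, ‖lam i.succ / lam 0‖ ≤ 1) ∧ ‖Phi1 p a lam‖ = 1}

/-- `f` is (on `𝒟_+`) a rational function of `λ_1/λ_0, …, λ_N/λ_0` defined at every
point of `𝒟_+`. -/
def RatOnDplus (p : ℕ) {n N : ℕ} (a : Fin (N + 1) → Fin n → ℤ) {K : Type*} [NormedField K]
    (f : (Fin (N + 1) → K) → K) : Prop :=
  ∃ q r : MvPolynomial (Fin N) K,
    (∀ lam ∈ Dplus p a (K := K), MvPolynomial.eval (fun i => lam i.succ / lam 0) r ≠ 0) ∧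
    ∀ lam ∈ Dplus p a (K := K),
      f lam = MvPolynomial.eval (fun i => lam i.succ / lam 0) q /
        MvPolynomial.eval (fun i => lam i.succ / lam 0) r

/-- `F` is a uniform limit on `𝒟_+` of rational functions in the `λ_i/λ_0` defined
at every point of `𝒟_+`. -/
def UnifLimitRat (p : ℕ) {n N : ℕ} (a : Fin (N + 1) → Fin n → ℤ) {K : Type*} [NormedField K]
    (F : (Fin (N + 1) → K) → K) : Prop :=
  ∃ u : ℕ → (Fin (N + 1) → K) → K, (∀ k, RatOnDplus p a (u k)) ∧
    TendstoUniformlyOn u F Filter.atTop (Dplus p a (K := K))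

/-- Membership in `R'`: the power series converges on `𝒟` and its sum extends to an
element of `R'`, i.e. to a uniform limit on `𝒟_+` of rational functions in the `λ_i/λ_0`
defined at every point of `𝒟_+`. -/
def memR' (p : ℕ) {n N : ℕ} (a : Fin (N + 1) → Fin n → ℤ) {K : Type*} [NormedField K]
    (c : MvPowerSeries (Fin N) K) : Prop :=
  ∃ F : (Fin (N + 1) → K) → K, UnifLimitRat p a F ∧
    ∀ lam ∈ Dopen (N := N) (K := K),
      HasSum (fun ν : Fin N →₀ ℕ => c ν * ∏ i : Fin N, (lam i.succ / lam 0) ^ ν i) (F lam)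

/-- Invertibility in `R'`. -/
def invR' (p : ℕ) {n N : ℕ} (a : Fin (N + 1) → Fin n → ℤ) {K : Type*} [NormedField K]
    (f : MvPowerSeries (Fin N) K) : Prop :=
  memR' p a f ∧ ∃ g : MvPowerSeries (Fin N) K, memR' p a g ∧ f * g = 1

/-- Membership in `S'`. -/
def memS' (p : ℕ) {n N : ℕ} (a : Fin (N + 1) → Fin n → ℤ) {K : Type*} [NormedField K]
    (ξ : {μ : Fin (n + 1) → ℤ // μ ∈ latticeMint a} → MvPowerSeries (Fin N) K) : Prop :=
  memS a ξ ∧ ∀ μ, memR' p a (ξ μ)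

/-- Membership in `T`: `ξ ∈ S`, `ξ_{â_0} = 1` and `‖ξ‖ = 1`; the distinguished index
`μ0 ∈ M°` is the point `â_0`. -/
def memT {n N : ℕ} (a : Fin (N + 1) → Fin n → ℤ) {K : Type*} [NormedField K]
    (μ0 : {μ : Fin (n + 1) → ℤ // μ ∈ latticeMint a})
    (ξ : {μ : Fin (n + 1) → ℤ // μ ∈ latticeMint a} → MvPowerSeries (Fin N) K) : Prop :=
  memS a ξ ∧ ξ μ0 = 1 ∧ Snorm a ξ = 1

/-- `ζ` is a value of the map `β` at `ξ`: `ζ = α*(ξ)/η_{â_0}`, where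
`α*(ξ) = (η_ρ)_{ρ ∈ M°}` is given by the norm-convergent series of `etaTerm`s. -/
def isBeta (p : ℕ) {n N : ℕ} (a : Fin (N + 1) → Fin n → ℤ) {K : Type*} [NormedField K] (π : K)
    (μ0 : {μ : Fin (n + 1) → ℤ // μ ∈ latticeMint a})
    (ξ ζ : {μ : Fin (n + 1) → ℤ // μ ∈ latticeMint a} → MvPowerSeries (Fin N) K) : Prop :=
  ∃ η : {μ : Fin (n + 1) → ℤ // μ ∈ latticeMint a} → MvPowerSeries (Fin N) K,
    (∀ ρ, HasSumR (etaTerm p a π ξ ρ.1) (η ρ)) ∧ ∀ ρ, ζ ρ = η ρ * (η μ0)⁻¹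

/-- The coefficients `ξ_ρ` (Eq. (3.4) of the paper) of
`ξ(λ,x) = γ°(G(λ_0,x) ∏_{i=1}^N exp(πλ_i x^{â_i}))`:
`ξ_ρ = Σ (-1)^{ρ_0-1+Σl_i} (ρ_0-1+Σl_i)!/(l_1!⋯l_N!) ∏ (λ_i/λ_0)^{l_i}`, summed over
`(l_1,…,l_N) ∈ ℤ_{≥0}^N` such that `l_0 := ρ_0-1+Σl_i ≥ 0` and
`Σ l_i â_i - (l_0+1) â_0 = -ρ`. -/
noncomputable def xiRho {n N : ℕ} (a : Fin (N + 1) → Fin n → ℤ) (K : Type*) [Field K]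
    (ρ : Fin (n + 1) → ℤ) : MvPowerSeries (Fin N) K :=
  fun l =>
    if 0 ≤ ρ 0 - 1 + ∑ i : Fin N, (l i : ℤ) ∧
        (∑ i : Fin N, (l i : ℤ) • hat (a i.succ)) -
          (ρ 0 + ∑ i : Fin N, (l i : ℤ)) • hat (a 0) = -ρ then
      (-1 : K) ^ (ρ 0 - 1 + ∑ i : Fin N, (l i : ℤ)) *
        ((ρ 0 - 1 + ∑ i : Fin N, (l i : ℤ)).toNat.factorial : K) /
        ((∏ i : Fin N, (l i).factorial : ℕ) : K)
    else 0

/-- The series `Φ`, as a formal power series in the variables `λ_i/λ_0`. -/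
noncomputable def PhiSeries {n N : ℕ} (a : Fin (N + 1) → Fin n → ℤ) (K : Type*) [Field K] :
    MvPowerSeries (Fin N) K :=
  fun l =>
    if (fun i => l i) ∈ LplusSet a then
      (-1 : K) ^ (∑ i : Fin N, l i) * (Nat.multinomial Finset.univ l : K)
    else 0

/-- The truncation `Φ_1` of `Φ`, as a formal power series in the variables `λ_i/λ_0`. -/
noncomputable def Phi1Series (p : ℕ) {n N : ℕ} (a : Fin (N + 1) → Fin n → ℤ)
    (K : Type*) [Field K] : MvPowerSeries (Fin N) K :=
  fun l =>
    if (fun i => l i) ∈ LplusSet a ∧ ∑ i : Fin N, l i ≤ p - 1 then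
      (-1 : K) ^ (∑ i : Fin N, l i) * (Nat.multinomial Finset.univ l : K)
    else 0

/-- `B_μ(λ_0, …, λ_N)` as a function of `λ` (a finite sum; `finsum` junk value `0`
is irrelevant since the relevant index set is finite). -/
noncomputable def Bfull (p : ℕ) {n N : ℕ} (a : Fin (N + 1) → Fin n → ℤ)
    {K : Type*} [Field K] (π : K) (μ : Fin (n + 1) → ℤ) (lam : Fin (N + 1) → K) : K :=
  finsum fun ν : Fin (N + 1) → ℕ =>
    if ∑ j, ν j • hat (a j) = μ then
      (∏ j, dworkB p π (ν j)) * ∏ j, lam j ^ ν j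
    else 0

end AHG

open scoped BigOperators Classical

/-!
Every Dwork coefficient `b_i` with `i < p` is `π^i / i!`. Since a monomial `y^ν` of
`B_{(p-1)â_0}(1, y)` only involves indices `ν_i` and `p - 1 - Σ ν_i`, all below `p`, its coefficient
is `π^{p-1}/(p-1)! · C(p-1, Σ ν_i) · multinomial(ν) = -p/(p-1)! · (an integer)` for `ν ∈ L_+`,
`Σ ν_i ≤ p - 1`, and `0` otherwise. So every coefficient has norm `≤ 1/p`, with equality for the
constant term, and `C(p-1, s) ≡ (-1)^s (mod p)` shows that `B ≡ B(0) · Φ_1` up to coefficients of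
norm `≤ 1/p²`; on `𝒟_+`, where `‖Φ_1‖ = 1`, the value of `B` therefore has norm `1/p`.
The formal inverse of `B` has coefficients of norm `≤ p` (the constant term dominates), so it
converges on `𝒟` to `1/B`, and `1/B` is a rational function without poles on `𝒟_+`.
-/

open Filter Topology
open scoped Nat

theorem IsUltrametricDist.norm_eq_of_norm_sub_lt {M : Type*} [SeminormedAddCommGroup M]
    [IsUltrametricDist M] {x y : M} (h : ‖x - y‖ < ‖y‖) : ‖x‖ = ‖y‖ := by
  have := IsUltrametricDist.norm_add_eq_max_of_norm_ne_norm h.ne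
  rwa [sub_add_cancel, max_eq_right h.le] at this

theorem Finsupp.tendsto_degree_cofinite_atTop {σ : Type*} [Finite σ] :
    Tendsto (degree : (σ →₀ ℕ) → ℕ) cofinite atTop := by
  refine tendsto_atTop.mpr fun m =>
    eventually_cofinite.mpr ((finite_of_degree_le m).subset fun ν hν => ?_)
  exact (not_le.mp hν).le

namespace MvPowerSeries

variable {σ R : Type*}

theorem exists_coe_eq_of_coeff_eq_zero [Finite σ] [CommSemiring R] {f : MvPowerSeries σ R}
    (m : ℕ) (hf : ∀ ν, m < ν.degree → coeff ν f = 0) :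
    ∃ q : MvPolynomial σ R, (q : MvPowerSeries σ R) = f := by
  have hfin : (Function.support fun ν => coeff ν f).Finite :=
    (Finsupp.finite_of_degree_le m).subset fun ν hν => not_lt.mp fun h => hν (hf ν h)
  exact ⟨AddMonoidAlgebra.ofCoeff (Finsupp.ofSupportFinite _ hfin), by ext ν; rfl⟩

section HasSum

variable [Fintype σ] [CommSemiring R] [TopologicalSpace R]

theorem hasSum_coeff_one_mul_prod_pow (y : σ → R) :
    HasSum (fun ν => coeff ν (1 : MvPowerSeries σ R) * ∏ i, y i ^ ν i) 1 := by
  classical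
  convert hasSum_ite_eq (0 : σ →₀ ℕ) (1 : R) using 2 with ν
  split_ifs with h <;> simp [coeff_one, h]

variable [IsTopologicalSemiring R]

theorem hasSum_coeff_monomial_mul_prod_pow {g : MvPowerSeries σ R} {y : σ → R} {G : R}
    (hg : HasSum (fun ν => coeff ν g * ∏ i, y i ^ ν i) G) (α : σ →₀ ℕ) (c : R) :
    HasSum (fun ν => coeff ν (monomial α c * g) * ∏ i, y i ^ ν i)
      ((c * ∏ i, y i ^ α i) * G) := by
  classical
  have hinj : Function.Injective (α + · : (σ →₀ ℕ) → σ →₀ ℕ) := add_right_injective α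
  refine (hinj.hasSum_iff fun ν hν => ?_).mp ?_
  · rw [coeff_monomial_mul, if_neg fun h => hν ⟨ν - α, add_tsub_cancel_of_le h⟩, zero_mul]
  · refine (hg.mul_left (c * ∏ i, y i ^ α i)).congr_fun fun β => ?_
    simp only [Function.comp_apply, coeff_monomial_mul, le_add_iff_nonneg_right, zero_le,
      if_true, add_tsub_cancel_left, Finsupp.add_apply, pow_add, Finset.prod_mul_distrib]
    ring

theorem hasSum_coeff_coe_mul_prod_pow (q : MvPolynomial σ R) {g : MvPowerSeries σ R}
    {y : σ → R} {G : R} (hg : HasSum (fun ν => coeff ν g * ∏ i, y i ^ ν i) G) :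
    HasSum (fun ν => coeff ν ((q : MvPowerSeries σ R) * g) * ∏ i, y i ^ ν i)
      (MvPolynomial.eval y q * G) := by
  induction q using MvPolynomial.induction_on' with
  | monomial α c =>
    rw [MvPolynomial.coe_monomial, MvPolynomial.eval_monomial, Finsupp.prod_pow]
    exact hasSum_coeff_monomial_mul_prod_pow hg α c
  | add q₁ q₂ h₁ h₂ =>
    simpa only [MvPolynomial.coe_add, add_mul, map_add] using h₁.add h₂

theorem _root_.MvPolynomial.hasSum_eval (q : MvPolynomial σ R) (y : σ → R) :
    HasSum (fun ν => MvPolynomial.coeff ν q * ∏ i, y i ^ ν i) (MvPolynomial.eval y q) := by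
  simpa only [mul_one, MvPolynomial.coeff_coe] using
    hasSum_coeff_coe_mul_prod_pow q (hasSum_coeff_one_mul_prod_pow y)

end HasSum

theorem hasSum_coeff_mul_prod_pow_of_coe_mul_eq_one [Fintype σ] {K : Type*} [Field K]
    [TopologicalSpace K] [IsTopologicalRing K] [T2Space K] {q : MvPolynomial σ K}
    {g : MvPowerSeries σ K} (hqg : (q : MvPowerSeries σ K) * g = 1) {y : σ → K}
    (hg : Summable fun ν => coeff ν g * ∏ i, y i ^ ν i) :
    HasSum (fun ν => coeff ν g * ∏ i, y i ^ ν i) (MvPolynomial.eval y q)⁻¹ := by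
  obtain ⟨G, hG⟩ := hg
  have hprod := hasSum_coeff_coe_mul_prod_pow q hG
  rw [hqg] at hprod
  rwa [← eq_inv_of_mul_eq_one_right (hprod.unique (hasSum_coeff_one_mul_prod_pow y))]

variable {K : Type*} [NormedField K]

theorem tendsto_coeff_mul_prod_pow_cofinite [Fintype σ] {g : MvPowerSeries σ K} {C : ℝ}
    (hg : ∀ ν, ‖coeff ν g‖ ≤ C) {y : σ → K} (hy : ∀ i, ‖y i‖ < 1) :
    Tendsto (fun ν => coeff ν g * ∏ i, y i ^ ν i) cofinite (𝓝 0) := by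
  set r : NNReal := Finset.univ.sup fun i => ‖y i‖₊
  have hr : r < 1 := (Finset.sup_lt_iff zero_lt_one).mpr fun i _ => hy i
  have hbound : ∀ ν, ‖coeff ν g * ∏ i, y i ^ ν i‖ ≤ C * (r : ℝ) ^ Finsupp.degree ν := by
    intro ν
    rw [norm_mul, norm_prod, Finsupp.degree_eq_sum, ← Finset.prod_pow_eq_pow_sum]
    refine mul_le_mul (hg ν) (Finset.prod_le_prod (fun i _ => norm_nonneg _) fun i _ => ?_)
      (by positivity) ((norm_nonneg _).trans (hg ν))
    rw [norm_pow]
    exact pow_le_pow_left₀ (norm_nonneg _)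
      (NNReal.coe_le_coe.mpr (Finset.le_sup (f := fun i => ‖y i‖₊) (Finset.mem_univ i))) _
  refine squeeze_zero_norm hbound ?_
  simpa using ((tendsto_pow_atTop_nhds_zero_of_lt_one r.2 hr).comp
    Finsupp.tendsto_degree_cofinite_atTop).const_mul C

variable [IsUltrametricDist K]

theorem _root_.MvPolynomial.norm_eval_le_of_forall_norm_coeff_le [Fintype σ]
    {q : MvPolynomial σ K} {C : ℝ} (hC : 0 ≤ C) (hq : ∀ ν, ‖MvPolynomial.coeff ν q‖ ≤ C)
    {y : σ → K} (hy : ∀ i, ‖y i‖ ≤ 1) : ‖MvPolynomial.eval y q‖ ≤ C := by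
  rw [MvPolynomial.eval_eq']
  refine IsUltrametricDist.norm_sum_le_of_forall_le_of_nonneg hC fun ν _ => ?_
  rw [norm_mul, norm_prod]
  calc ‖MvPolynomial.coeff ν q‖ * ∏ i, ‖y i ^ ν i‖ ≤ C * 1 :=
        mul_le_mul (hq ν) (Finset.prod_le_one (fun i _ => norm_nonneg _) fun i _ => by
          rw [norm_pow]; exact pow_le_one₀ (norm_nonneg _) (hy i)) (by positivity) hC
    _ = C := mul_one C

theorem norm_coeff_le_of_mul_eq_one {f g : MvPowerSeries σ K} (hfg : f * g = 1)
    (hf : ∀ ν, ‖coeff ν f‖ ≤ ‖constantCoeff f‖) (ν : σ →₀ ℕ) :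
    ‖coeff ν g‖ ≤ ‖constantCoeff f‖⁻¹ := by
  classical
  have hf0 : constantCoeff f ≠ 0 :=
    left_ne_zero_of_mul_eq_one (by simpa using congrArg constantCoeff hfg)
  induction ν using WellFoundedLT.induction with
  | _ ν ih =>
  have hmem : ((0 : σ →₀ ℕ), ν) ∈ Finset.HasAntidiagonal.antidiagonal ν := by simp
  have hc := congrArg (coeff ν) hfg
  rw [coeff_mul, ← Finset.add_sum_erase _ _ hmem, coeff_one] at hc
  have hrest : ‖∑ q ∈ (Finset.HasAntidiagonal.antidiagonal ν).erase (0, ν),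
      coeff q.1 f * coeff q.2 g‖ ≤ 1 := by
    refine IsUltrametricDist.norm_sum_le_of_forall_le_of_nonneg zero_le_one fun q hq => ?_
    obtain ⟨hq0, hqν⟩ := Finset.mem_erase.mp hq
    rw [Finset.HasAntidiagonal.mem_antidiagonal] at hqν
    have hlt : q.2 < ν :=
      lt_of_le_of_ne (hqν ▸ le_add_self) fun h => hq0 (Prod.ext (by simpa [h] using hqν) h)
    calc ‖coeff q.1 f * coeff q.2 g‖ ≤ ‖constantCoeff f‖ * ‖constantCoeff f‖⁻¹ := by
          rw [norm_mul]; exact mul_le_mul (hf _) (ih _ hlt) (norm_nonneg _) (norm_nonneg _)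
      _ = 1 := mul_inv_cancel₀ (norm_ne_zero_iff.mpr hf0)
  have hlead : ‖constantCoeff f * coeff ν g‖ ≤ 1 := by
    rw [← coeff_zero_eq_constantCoeff_apply, eq_sub_of_add_eq hc, sub_eq_add_neg]
    refine (IsUltrametricDist.norm_add_le_max _ _).trans (max_le ?_ (by rwa [norm_neg]))
    split_ifs <;> simp
  rw [norm_mul] at hlead
  calc ‖coeff ν g‖ = ‖constantCoeff f‖⁻¹ * (‖constantCoeff f‖ * ‖coeff ν g‖) := by
        rw [inv_mul_cancel_left₀ (norm_ne_zero_iff.mpr hf0)]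
    _ ≤ ‖constantCoeff f‖⁻¹ := by simpa using mul_le_mul_of_nonneg_left hlead (by positivity)

end MvPowerSeries

theorem ZMod.natCast_sub_one_choose {p : ℕ} [Fact p.Prime] {s : ℕ} (hs : s < p) :
    ((p - 1).choose s : ZMod p) = (-1) ^ s := by
  induction s with
  | zero => simp
  | succ s ih =>
    have hp : p.Prime := Fact.out
    have h := Nat.choose_succ_succ' (p - 1) s
    rw [Nat.sub_add_cancel hp.one_le] at h
    have h' := congrArg (Nat.cast : ℕ → ZMod p) h
    rw [(ZMod.natCast_eq_zero_iff _ _).mpr (hp.dvd_choose_self s.succ_ne_zero hs), Nat.cast_add,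
      ih (by omega)] at h'
    rw [pow_succ]
    linear_combination -h'

section PadicIsometry

variable {p : ℕ} [Fact p.Prime] {K : Type*} [NormedField K] {ι : ℚ_[p] →+* K}

theorem norm_intCast_of_isometry (hι : ∀ x, ‖ι x‖ = ‖x‖) (k : ℤ) :
    ‖(k : K)‖ = ‖(k : ℚ_[p])‖ := by
  rw [← map_intCast ι, hι]

theorem norm_natCast_le_one_of_isometry (hι : ∀ x, ‖ι x‖ = ‖x‖) (m : ℕ) : ‖(m : K)‖ ≤ 1 := by
  simpa using (norm_intCast_of_isometry hι m).trans_le (Padic.norm_int_le_one m)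

theorem norm_natCast_prime_of_isometry (hι : ∀ x, ‖ι x‖ = ‖x‖) : ‖(p : K)‖ = (p : ℝ)⁻¹ := by
  simpa using (norm_intCast_of_isometry hι p).trans Padic.norm_p

theorem norm_factorial_of_isometry (hι : ∀ x, ‖ι x‖ = ‖x‖) {m : ℕ} (hm : m < p) :
    ‖(m ! : K)‖ = 1 := by
  have hp : p.Prime := Fact.out
  have h := norm_intCast_of_isometry hι (m ! : ℕ)
  rw [Int.cast_natCast, Int.cast_natCast, Padic.norm_natCast_eq_one_iff.mpr] at h
  · exact h
  · exact (hp.coprime_iff_not_dvd).mpr fun hdvd => hm.not_ge (hp.dvd_factorial.mp hdvd)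

theorem norm_choose_sub_neg_one_pow_le_of_isometry (hι : ∀ x, ‖ι x‖ = ‖x‖) {s : ℕ} (hs : s < p) :
    ‖((p - 1).choose s : K) - (-1) ^ s‖ ≤ (p : ℝ)⁻¹ := by
  have hdvd : (p : ℤ) ∣ (p - 1).choose s - (-1) ^ s := by
    rw [← ZMod.intCast_zmod_eq_zero_iff_dvd]
    push_cast
    rw [ZMod.natCast_sub_one_choose hs, sub_self]
  have h1 : ‖(((p - 1).choose s - (-1) ^ s : ℤ) : ℚ_[p])‖ ≤ (p : ℝ)⁻¹ := by
    have := (Padic.norm_int_le_pow_iff_dvd ((p - 1).choose s - (-1) ^ s) 1).mpr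
      (by rwa [pow_one])
    rwa [Nat.cast_one, zpow_neg, zpow_one] at this
  calc ‖((p - 1).choose s : K) - (-1) ^ s‖ = ‖(((p - 1).choose s - (-1) ^ s : ℤ) : K)‖ := by
        push_cast; rfl
    _ ≤ _ := (norm_intCast_of_isometry hι _).trans_le h1

end PadicIsometry

namespace AHG

section RPrime

variable {p n N : ℕ} {a : Fin (N + 1) → Fin n → ℤ} {K : Type*} [NormedField K]

theorem RatOnDplus.unifLimitRat {F : (Fin (N + 1) → K) → K} (hF : RatOnDplus p a F) :
    UnifLimitRat p a F :=
  ⟨fun _ => F, fun _ => hF, fun _ hu => Eventually.of_forall fun _ _ _ => refl_mem_uniformity hu⟩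

theorem memR'_coe (q : MvPolynomial (Fin N) K) : memR' p a (q : MvPowerSeries (Fin N) K) := by
  refine ⟨fun lam => MvPolynomial.eval (fun i => lam i.succ / lam 0) q,
    RatOnDplus.unifLimitRat ⟨q, 1, fun _ _ => ?_, fun _ _ => ?_⟩, fun lam _ => ?_⟩
  · simp
  · simp
  · exact q.hasSum_eval _

theorem memR'_of_coe_mul_eq_one [IsUltrametricDist K] [CompleteSpace K]
    {q : MvPolynomial (Fin N) K} {g : MvPowerSeries (Fin N) K}
    (hqg : (q : MvPowerSeries (Fin N) K) * g = 1)
    (hq : ∀ lam ∈ Dplus p a (K := K), MvPolynomial.eval (fun i => lam i.succ / lam 0) q ≠ 0)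
    {C : ℝ} (hg : ∀ ν, ‖MvPowerSeries.coeff ν g‖ ≤ C) : memR' p a g := by
  refine ⟨fun lam => (MvPolynomial.eval (fun i => lam i.succ / lam 0) q)⁻¹,
    RatOnDplus.unifLimitRat ⟨1, q, hq, fun _ _ => ?_⟩, fun _ hlam => ?_⟩
  · simp
  · exact MvPowerSeries.hasSum_coeff_mul_prod_pow_of_coe_mul_eq_one hqg
      (NonarchimedeanAddGroup.summable_of_tendsto_cofinite_zero
        (MvPowerSeries.tendsto_coeff_mul_prod_pow_cofinite hg hlam.2))

theorem Rnorm_eq_of_forall_le {f : MvPowerSeries (Fin N) K} {c : ℝ} (hf : ∀ ν, ‖f ν‖ ≤ c)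
    {ν₀ : Fin N →₀ ℕ} (h : ‖f ν₀‖ = c) : Rnorm f = c :=
  le_antisymm (ciSup_le hf) (h ▸ le_ciSup ⟨c, Set.forall_mem_range.mpr hf⟩ ν₀)

end RPrime

section DworkCoefficients

variable {p : ℕ} {n N : ℕ} (a : Fin (N + 1) → Fin n → ℤ) {K : Type*} [Field K] (π : K)

theorem dworkB_of_lt {i : ℕ} (hi : i < p) : dworkB p π i = π ^ i / i ! := by
  rw [dworkB, Finset.sum_eq_single 0]
  · simp
  · intro k _ hk
    rw [if_neg]
    have := Nat.le_mul_of_pos_right p (Nat.pos_of_ne_zero hk)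
    omega
  · simp

theorem smul_hat_zero_add_sum_eq_iff (m : ℕ) (l : Fin N → ℕ) :
    (0 ≤ (m : ℤ) - ∑ i, (l i : ℤ) ∧
      ((m : ℤ) - ∑ i, (l i : ℤ)) • hat (a 0) + ∑ i, (l i : ℤ) • hat (a i.succ) =
        (m : ℤ) • hat (a 0)) ↔ l ∈ LplusSet a ∧ ∑ i, l i ≤ m := by
  have hsum : ∑ i, (l i : ℤ) • hat (a i.succ) = ∑ i, l i • hat (a i.succ) :=
    Finset.sum_congr rfl fun i _ => natCast_zsmul _ _
  have hcast : ((∑ i, l i : ℕ) : ℤ) = ∑ i, (l i : ℤ) := Nat.cast_sum _ _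
  rw [LplusSet, Set.mem_ofPred_eq, ← hsum, ← natCast_zsmul, hcast, sub_smul,
    sub_add_eq_add_sub, sub_eq_iff_eq_add, add_right_inj, eq_comm, and_comm]
  exact and_congr Iff.rfl (by omega)

theorem Bone_natCast_smul_hat_apply (m : ℕ) (ν : Fin N →₀ ℕ) :
    Bone p a π ((m : ℤ) • hat (a 0)) ν =
      if ⇑ν ∈ LplusSet a ∧ ∑ i, ν i ≤ m then
        dworkB p π (m - ∑ i, ν i) * ∏ i, dworkB p π (ν i)
      else 0 := by
  have h0 : ((m : ℤ) • hat (a 0)) 0 = m := by simp [hat]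
  simp only [Bone, h0, smul_hat_zero_add_sum_eq_iff]
  split_ifs
  · congr 2
    rw [← Nat.cast_sum]
    omega
  · rfl

theorem Bone_pred_smul_hat_apply [CharZero K] (hp : 0 < p) (ν : Fin N →₀ ℕ) :
    Bone p a π (((p : ℤ) - 1) • hat (a 0)) ν =
      if ⇑ν ∈ LplusSet a ∧ ∑ i, ν i ≤ p - 1 then
        π ^ (p - 1) / (p - 1)! *
          ((p - 1).choose (∑ i, ν i) * Nat.multinomial Finset.univ ⇑ν : ℕ)
      else 0 := by
  rw [← Nat.cast_pred hp, Bone_natCast_smul_hat_apply]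
  split_ifs with h
  · set s := ∑ i, ν i with hs
    have hνp : ∀ i, ν i < p := fun i =>
      (Finset.single_le_sum (fun j _ => Nat.zero_le (ν j)) (Finset.mem_univ i)).trans_lt
        (by omega)
    have hfac : ((p - 1)! : K) =
        (p - 1).choose s * ((∏ i, (ν i)! : ℕ) * Nat.multinomial Finset.univ ⇑ν) * (p - 1 - s)! := by
      rw [← Nat.choose_mul_factorial_mul_factorial h.2, ← Nat.multinomial_spec]
      push_cast; ring
    rw [dworkB_of_lt π (by omega), Finset.prod_congr rfl fun i _ => dworkB_of_lt π (hνp i),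
      Finset.prod_div_distrib, Finset.prod_pow_eq_pow_sum, ← hs, hfac]
    have hpow : π ^ (p - 1) = π ^ (p - 1 - s) * π ^ s := by rw [← pow_add]; congr 1; omega
    have hC : ((p - 1).choose s : K) ≠ 0 := Nat.cast_ne_zero.mpr (Nat.choose_pos h.2).ne'
    have hM : (Nat.multinomial Finset.univ ⇑ν : K) ≠ 0 :=
      Nat.cast_ne_zero.mpr (Nat.multinomial_pos _ _).ne'
    rw [hpow]
    push_cast
    field_simp
  · rfl

end DworkCoefficients

section DworkPolynomial

variable {p n N : ℕ} (a : Fin (N + 1) → Fin n → ℤ) {K : Type*}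

theorem Bone_pred_smul_hat_eq_zero [Field K] (π : K) (hp : 0 < p) {ν : Fin N →₀ ℕ}
    (hν : p - 1 < ν.degree) : Bone p a π (((p : ℤ) - 1) • hat (a 0)) ν = 0 := by
  rw [← Nat.cast_pred hp, Bone_natCast_smul_hat_apply, if_neg]
  rw [Finsupp.degree_eq_sum] at hν
  omega

theorem coeff_Phi1Series [Field K] (ν : Fin N →₀ ℕ) :
    MvPowerSeries.coeff ν (Phi1Series p a K) =
      if ⇑ν ∈ LplusSet a ∧ ∑ i, ν i ≤ p - 1 then
        (-1 : K) ^ (∑ i, ν i) * (Nat.multinomial Finset.univ ν : K)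
      else 0 :=
  rfl

theorem coeff_Phi1Series_eq_zero [Field K] {ν : Fin N →₀ ℕ} (hν : p - 1 < ν.degree) :
    MvPowerSeries.coeff ν (Phi1Series p a K) = 0 := by
  rw [coeff_Phi1Series, if_neg]
  rw [Finsupp.degree_eq_sum] at hν
  omega

theorem Phi1_eq_eval [NormedField K] (hp : 0 < p) {q : MvPolynomial (Fin N) K}
    (hq : (q : MvPowerSeries (Fin N) K) = Phi1Series p a K) (lam : Fin (N + 1) → K) :
    Phi1 p a lam = MvPolynomial.eval (fun i => lam i.succ / lam 0) q := by
  have h := q.hasSum_eval (fun i => lam i.succ / lam 0)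
  simp only [← MvPolynomial.coeff_coe, hq] at h
  rw [← Finsupp.equivFunOnFinite.symm.hasSum_iff] at h
  refine Eq.trans ?_ (h.unique (hasSum_sum_of_ne_finset_zero
    (s := Fintype.piFinset fun _ => Finset.range p) fun l hl => ?_)).symm
  · rw [Phi1, Finset.sum_filter]
    refine Finset.sum_congr rfl fun l _ => ?_
    simp [coeff_Phi1Series, ite_mul]
  · rw [Function.comp_apply, coeff_Phi1Series, if_neg, zero_mul]
    rintro ⟨-, hle⟩
    simp only [Finsupp.coe_equivFunOnFinite_symm] at hle
    refine hl (Fintype.mem_piFinset.mpr fun i => Finset.mem_range.mpr ?_)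
    have := Finset.single_le_sum (f := l) (fun j _ => Nat.zero_le _) (Finset.mem_univ i)
    omega

end DworkPolynomial

section DworkNorms

variable {p : ℕ} [Fact p.Prime] {n N : ℕ} (a : Fin (N + 1) → Fin n → ℤ) {K : Type*}
  [NormedField K] {ι : ℚ_[p] →+* K} {π : K}

theorem norm_pow_pred_div_factorial (hι : ∀ x, ‖ι x‖ = ‖x‖) (hπ : π ^ (p - 1) = -(p : K)) :
    ‖π ^ (p - 1) / (p - 1)!‖ = (p : ℝ)⁻¹ := by
  have hp : 0 < p := (Fact.out : p.Prime).pos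
  rw [norm_div, hπ, norm_neg, norm_natCast_prime_of_isometry hι,
    norm_factorial_of_isometry hι (by omega), div_one]

theorem Bone_pred_smul_hat_zero [CharZero K] :
    Bone p a π (((p : ℤ) - 1) • hat (a 0)) 0 = π ^ (p - 1) / (p - 1)! := by
  rw [Bone_pred_smul_hat_apply a π (Fact.out : p.Prime).pos, if_pos ⟨by simp [LplusSet], by simp⟩]
  simp [Nat.multinomial]

theorem norm_Bone_pred_smul_hat_le [CharZero K] (hι : ∀ x, ‖ι x‖ = ‖x‖)
    (hπ : π ^ (p - 1) = -(p : K)) (ν : Fin N →₀ ℕ) :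
    ‖Bone p a π (((p : ℤ) - 1) • hat (a 0)) ν‖ ≤ (p : ℝ)⁻¹ := by
  rw [Bone_pred_smul_hat_apply a π (Fact.out : p.Prime).pos]
  split_ifs
  · rw [norm_mul, norm_pow_pred_div_factorial hι hπ]
    exact mul_le_of_le_one_right (by positivity) (norm_natCast_le_one_of_isometry hι _)
  · simp

theorem norm_Bone_pred_smul_hat_sub_le [CharZero K] (hι : ∀ x, ‖ι x‖ = ‖x‖)
    (hπ : π ^ (p - 1) = -(p : K)) (ν : Fin N →₀ ℕ) :
    ‖Bone p a π (((p : ℤ) - 1) • hat (a 0)) ν -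
        Bone p a π (((p : ℤ) - 1) • hat (a 0)) 0 * MvPowerSeries.coeff ν (Phi1Series p a K)‖ ≤
      (p : ℝ)⁻¹ * (p : ℝ)⁻¹ := by
  rw [Bone_pred_smul_hat_apply a π (Fact.out : p.Prime).pos, Bone_pred_smul_hat_zero,
    coeff_Phi1Series]
  split_ifs with h
  · have hp : 0 < p := (Fact.out : p.Prime).pos
    set c : K := π ^ (p - 1) / (p - 1)!
    set M := Nat.multinomial Finset.univ ⇑ν
    set s := ∑ i, ν i
    have hc : ‖c‖ = (p : ℝ)⁻¹ := norm_pow_pred_div_factorial hι hπ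
    have hfactor : c * (((p - 1).choose s * M : ℕ) : K) - c * ((-1) ^ s * M) =
        c * M * ((p - 1).choose s - (-1) ^ s) := by
      push_cast; ring
    rw [hfactor, norm_mul, norm_mul, hc]
    exact mul_le_mul (mul_le_of_le_one_right (by positivity) (norm_natCast_le_one_of_isometry hι _))
      (norm_choose_sub_neg_one_pow_le_of_isometry hι (by omega)) (norm_nonneg _) (by positivity)
  · simp only [mul_zero, sub_zero, norm_zero]
    positivity

theorem norm_eval_Bone_pred_smul_hat_of_mem_Dplus [CharZero K] [IsUltrametricDist K]
    (hι : ∀ x, ‖ι x‖ = ‖x‖) (hπ : π ^ (p - 1) = -(p : K)) {q : MvPolynomial (Fin N) K}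
    (hq : (q : MvPowerSeries (Fin N) K) = Bone p a π (((p : ℤ) - 1) • hat (a 0)))
    {lam : Fin (N + 1) → K} (hlam : lam ∈ Dplus p a (K := K)) :
    ‖MvPolynomial.eval (fun i => lam i.succ / lam 0) q‖ = (p : ℝ)⁻¹ := by
  have hp : 0 < p := (Fact.out : p.Prime).pos
  obtain ⟨qΦ, hqΦ⟩ := MvPowerSeries.exists_coe_eq_of_coeff_eq_zero (p - 1) fun _ =>
    coeff_Phi1Series_eq_zero a (K := K)
  obtain ⟨-, hy, hΦ⟩ := hlam
  rw [Phi1_eq_eval a hp hqΦ] at hΦ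
  set y : Fin N → K := fun i => lam i.succ / lam 0
  have hlead : ‖Bone p a π (((p : ℤ) - 1) • hat (a 0)) 0 * MvPolynomial.eval y qΦ‖ =
      (p : ℝ)⁻¹ := by
    rw [norm_mul, hΦ, mul_one, Bone_pred_smul_hat_zero, norm_pow_pred_div_factorial hι hπ]
  have hdiff : ‖MvPolynomial.eval y q -
      Bone p a π (((p : ℤ) - 1) • hat (a 0)) 0 * MvPolynomial.eval y qΦ‖ ≤
        (p : ℝ)⁻¹ * (p : ℝ)⁻¹ := by
    rw [← MvPolynomial.eval_C (f := y) (Bone p a π (((p : ℤ) - 1) • hat (a 0)) 0), ← map_mul,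
      ← map_sub]
    refine MvPolynomial.norm_eval_le_of_forall_norm_coeff_le (by positivity) (fun ν => ?_) hy
    rw [MvPolynomial.coeff_sub, MvPolynomial.coeff_C_mul, ← MvPolynomial.coeff_coe,
      ← MvPolynomial.coeff_coe, hq, hqΦ]
    exact norm_Bone_pred_smul_hat_sub_le a hι hπ ν
  have hp1 : (1 : ℝ) < p := by exact_mod_cast (Fact.out : p.Prime).one_lt
  refine (IsUltrametricDist.norm_eq_of_norm_sub_lt (hdiff.trans_lt ?_)).trans hlead
  rw [hlead]
  exact mul_lt_of_lt_one_right (by positivity) (inv_lt_one_of_one_lt₀ hp1)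

end DworkNorms

end AHG

theorem stmt_10_general (p : ℕ) [Fact p.Prime]
    {K : Type*} [NormedField K] [IsUltrametricDist K] [CompleteSpace K]
    (ι : ℚ_[p] →+* K) (hι : ∀ x, ‖ι x‖ = ‖x‖)
    (π : K) (hπ : π ^ (p - 1) = -(p : K))
    (n N : ℕ) (a : Fin (N + 1) → Fin n → ℤ) :
    AHG.memR' p a (AHG.Bone p a π (((p : ℤ) - 1) • AHG.hat (a 0))) ∧
    (∃ g : MvPowerSeries (Fin N) K, AHG.memR' p a g ∧
      AHG.Bone p a π (((p : ℤ) - 1) • AHG.hat (a 0)) * g = 1) ∧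
    AHG.Rnorm (AHG.Bone p a π (((p : ℤ) - 1) • AHG.hat (a 0))) = (p : ℝ)⁻¹ ∧
    (∀ ν : Fin N →₀ ℕ,
      ‖AHG.Bone p a π (((p : ℤ) - 1) • AHG.hat (a 0)) ν‖ ≤ (p : ℝ)⁻¹) ∧
    AHG.Bone p a π (((p : ℤ) - 1) • AHG.hat (a 0)) (0 : Fin N →₀ ℕ) =
      -(p : K) / (Nat.factorial (p - 1) : K) ∧
    ‖AHG.Bone p a π (((p : ℤ) - 1) • AHG.hat (a 0)) (0 : Fin N →₀ ℕ)‖ = (p : ℝ)⁻¹ ∧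
    ∀ lam ∈ AHG.Dplus p a (K := K), ∃ s : K,
      HasSum (fun ν : Fin N →₀ ℕ =>
        AHG.Bone p a π (((p : ℤ) - 1) • AHG.hat (a 0)) ν *
          ∏ i : Fin N, (lam i.succ / lam 0) ^ ν i) s ∧
      ‖s‖ = (p : ℝ)⁻¹ := by
  have : CharZero K := (RingHom.charZero_iff ι.injective).mp inferInstance
  have hp : 0 < p := (Fact.out : p.Prime).pos
  obtain ⟨q, hq⟩ := MvPowerSeries.exists_coe_eq_of_coeff_eq_zero
    (f := AHG.Bone p a π (((p : ℤ) - 1) • AHG.hat (a 0))) (p - 1) fun _ =>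
      AHG.Bone_pred_smul_hat_eq_zero a π hp
  have hB₀ : ‖AHG.Bone p a π (((p : ℤ) - 1) • AHG.hat (a 0)) 0‖ = (p : ℝ)⁻¹ := by
    rw [AHG.Bone_pred_smul_hat_zero, AHG.norm_pow_pred_div_factorial hι hπ]
  have hBle := AHG.norm_Bone_pred_smul_hat_le a hι hπ
  have hBinv := MvPowerSeries.mul_inv_cancel (AHG.Bone p a π (((p : ℤ) - 1) • AHG.hat (a 0)))
    (norm_ne_zero_iff.mp (hB₀.trans_ne (by positivity)))
  have hDplus := fun lam (hlam : lam ∈ AHG.Dplus p a) =>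
    AHG.norm_eval_Bone_pred_smul_hat_of_mem_Dplus a hι hπ hq hlam
  refine ⟨hq ▸ AHG.memR'_coe q, ⟨_, ?_, hBinv⟩, AHG.Rnorm_eq_of_forall_le hBle hB₀, hBle, ?_,
    hB₀, fun lam hlam => ⟨_, hq ▸ q.hasSum_eval _, hDplus lam hlam⟩⟩
  · exact AHG.memR'_of_coe_mul_eq_one (hq ▸ hBinv)
      (fun lam hlam => norm_ne_zero_iff.mp ((hDplus lam hlam).trans_ne (by positivity)))
      (MvPowerSeries.norm_coeff_le_of_mul_eq_one hBinv fun ν => (hBle ν).trans_eq hB₀.symm)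
  · rw [AHG.Bone_pred_smul_hat_zero, hπ]

/-- `B_{(p-1)â_0}(1,y)` is an invertible element of `R'` of norm exactly
`1/p`: all its coefficients have norm `≤ 1/p`, its constant term is `-p/(p-1)!` of norm
exactly `1/p`, and its value at every `λ ∈ 𝒟_+` has norm `1/p`. -/
theorem stmt_10 (p : ℕ) [Fact p.Prime] (hp2 : p ≠ 2)
    {K : Type*} [NormedField K] [IsUltrametricDist K] [CompleteSpace K] [IsAlgClosed K]
    (ι : ℚ_[p] →+* K) (hι : ∀ x, ‖ι x‖ = ‖x‖)
    (π : K) (hπ : π ^ (p - 1) = -(p : K))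
    (n N : ℕ) (hn : 0 < n) (hN : 0 < N) (a : Fin (N + 1) → Fin n → ℤ) :
    AHG.memR' p a (AHG.Bone p a π (((p : ℤ) - 1) • AHG.hat (a 0))) ∧
    (∃ g : MvPowerSeries (Fin N) K, AHG.memR' p a g ∧
      AHG.Bone p a π (((p : ℤ) - 1) • AHG.hat (a 0)) * g = 1) ∧
    AHG.Rnorm (AHG.Bone p a π (((p : ℤ) - 1) • AHG.hat (a 0))) = (p : ℝ)⁻¹ ∧
    (∀ ν : Fin N →₀ ℕ,
      ‖AHG.Bone p a π (((p : ℤ) - 1) • AHG.hat (a 0)) ν‖ ≤ (p : ℝ)⁻¹) ∧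
    AHG.Bone p a π (((p : ℤ) - 1) • AHG.hat (a 0)) (0 : Fin N →₀ ℕ) =
      -(p : K) / (Nat.factorial (p - 1) : K) ∧
    ‖AHG.Bone p a π (((p : ℤ) - 1) • AHG.hat (a 0)) (0 : Fin N →₀ ℕ)‖ = (p : ℝ)⁻¹ ∧
    ∀ lam ∈ AHG.Dplus p a (K := K), ∃ s : K,
      HasSum (fun ν : Fin N →₀ ℕ =>
        AHG.Bone p a π (((p : ℤ) - 1) • AHG.hat (a 0)) ν *
          ∏ i : Fin N, (lam i.succ / lam 0) ^ ν i) s ∧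
      ‖s‖ = (p : ℝ)⁻¹ :=
  stmt_10_general p ι hι π hπ n N a
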